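/- Let X and Y be Hilbert spaces, T : X → Y a bounded linear operator with a least-squares projection approximation {(X_n, T_n)}. Then the following three conditions are equivalent: (i) weak convergence: T_n† y ⇀ T† y weakly for every y ∈ D(T†); (ii) strong convergence: ‖T_n† y − T† y‖ → 0 for every y ∈ D(T†); (iii) uniform boundedness: sup_n ‖T_n† T‖ < +∞. Moreover, each of these conditions implies kernel approximability: N(T) = {x ∈ X : dist(x, N(T) ∩ X_n) → 0 as n → ∞}. -/

import Mathlib

open Filter Topology Metric Submodule ContinuousLinearMap

/-- Orthogonal projection onto a subspace `K` (as an operator `H →L[ℝ] H`),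
defined whenever `K` admits orthogonal projections (e.g. `K` closed). -/
noncomputable def orthProj {H : Type*} [NormedAddCommGroup H] [InnerProductSpace ℝ H]
    (K : Submodule ℝ H) : H →L[ℝ] H :=
  open scoped Classical in
  if h : HasOrthogonalProjection K then
    haveI := h
    K.subtypeL.comp (orthogonalProjectionOnto K)
  else 0

variable {X Y : Type*} [NormedAddCommGroup X] [InnerProductSpace ℝ X] [CompleteSpace X]
  [NormedAddCommGroup Y] [InnerProductSpace ℝ Y] [CompleteSpace Y]

/-!
Each `Tₙ†` is linear and continuous, since it factors through the finite-dimensional space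
`T(Xₙ)`, and for `d ⊥ ker T` it maps `T (P_{Xₙ} d)` back to `P_{Xₙ} d`. Hence a uniform bound
`‖Tₙ†T‖ ≤ C` gives `‖Tₙ† y - T† y‖ ≤ (C + 1) ‖P_{Xₙ} d - d‖ → 0` for `d = T† y`; strong
convergence trivially gives weak convergence; and weak convergence of `Tₙ†T x` for every `x`
gives a uniform bound by applying Banach–Steinhaus twice. The same bound puts the point
`P_{Xₙ} x - Tₙ†T P_{Xₙ} x` of `ker T ∩ Xₙ` within `(C + 1) ‖P_{Xₙ} x - x‖` of any `x ∈ ker T`.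
-/

section

variable {E F : Type*} [NormedAddCommGroup E] [InnerProductSpace ℝ E]
  [NormedAddCommGroup F] [InnerProductSpace ℝ F]

theorem orthProj_eq_starProjection (K : Submodule ℝ E) [K.HasOrthogonalProjection] :
    orthProj K = K.starProjection := by
  rw [orthProj, dif_pos ‹_›]
  rfl

section orthProj

variable {K : Submodule ℝ E} [K.HasOrthogonalProjection]

theorem orthProj_apply_mem (x : E) : orthProj K x ∈ K := by
  rw [orthProj_eq_starProjection]
  exact starProjection_apply_mem K x

theorem orthProj_apply_of_mem {x : E} (hx : x ∈ K) : orthProj K x = x := by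
  rw [orthProj_eq_starProjection]
  exact starProjection_eq_self_iff.mpr hx

theorem orthProj_apply_eq_zero_iff {x : E} : orthProj K x = 0 ↔ x ∈ Kᗮ := by
  rw [orthProj_eq_starProjection]
  exact K.starProjection_apply_eq_zero_iff

theorem inner_orthProj_left_eq_right (u v : E) :
    inner ℝ (orthProj K u) v = inner ℝ u (orthProj K v) := by
  rw [orthProj_eq_starProjection]
  exact K.inner_starProjection_left_eq_right u v

theorem sub_orthProj_mem_orthogonal (x : E) : x - orthProj K x ∈ Kᗮ := by
  rw [orthProj_eq_starProjection]
  exact K.sub_starProjection_mem_orthogonal x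

end orthProj

theorem eq_of_mem_orthogonal_ker_of_apply_eq {S : E →L[ℝ] F} {u v : E}
    (hu : u ∈ (LinearMap.ker (S : E →ₗ[ℝ] F))ᗮ) (hv : v ∈ (LinearMap.ker (S : E →ₗ[ℝ] F))ᗮ)
    (h : S u = S v) : u = v := by
  have hker : u - v ∈ LinearMap.ker (S : E →ₗ[ℝ] F) := by simp [h]
  have hbot := (inf_orthogonal_eq_bot (LinearMap.ker (S : E →ₗ[ℝ] F))).le ⟨hker, sub_mem hu hv⟩
  exact sub_eq_zero.mp ((mem_bot ℝ).mp hbot)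

/-- For `W` the closure of the range of `S` this characterizes the Moore–Penrose inverse `S†`;
the approximations `Tₙ†` satisfy it for `S = T ∘ P_{Xₙ}` and `W = T(Xₙ)`. -/
def IsMinNormSolutionMap (S : E →L[ℝ] F) (W : Submodule ℝ F) (A : F → E) : Prop :=
  ∀ y, A y ∈ (LinearMap.ker (S : E →ₗ[ℝ] F))ᗮ ∧ S (A y) = orthProj W y

namespace IsMinNormSolutionMap

variable {S : E →L[ℝ] F} {W : Submodule ℝ F} {A : F → E}

theorem apply_eq (hA : IsMinNormSolutionMap S W A) {y : F} {u : E}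
    (hu : u ∈ (LinearMap.ker (S : E →ₗ[ℝ] F))ᗮ) (h : S u = orthProj W y) : A y = u :=
  eq_of_mem_orthogonal_ker_of_apply_eq (hA y).1 hu (by rw [(hA y).2, h])

theorem isLinearMap (hA : IsMinNormSolutionMap S W A) : IsLinearMap ℝ A where
  map_add y z := hA.apply_eq (add_mem (hA y).1 (hA z).1) (by simp [(hA y).2, (hA z).2])
  map_smul c y := hA.apply_eq (smul_mem _ c (hA y).1) (by simp [(hA y).2])

theorem map_sub (hA : IsMinNormSolutionMap S W A) (y z : F) : A (y - z) = A y - A z :=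
  (hA.isLinearMap.mk' A).map_sub y z

theorem apply_orthProj [W.HasOrthogonalProjection] (hA : IsMinNormSolutionMap S W A) (y : F) :
    A (orthProj W y) = A y :=
  hA.apply_eq (hA y).1 <| by rw [(hA y).2, orthProj_apply_of_mem (orthProj_apply_mem y)]

theorem apply_eq_of_sub_mem_orthogonal [W.HasOrthogonalProjection]
    (hA : IsMinNormSolutionMap S W A) {y z : F} (h : y - z ∈ Wᗮ) : A y = A z := by
  have hP : orthProj W y = orthProj W z := by
    rwa [← sub_eq_zero, ← ContinuousLinearMap.map_sub, orthProj_apply_eq_zero_iff]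
  rw [← hA.apply_orthProj y, hP, hA.apply_orthProj]

/-- Since `A = A ∘ P_W`, `A` factors through the finite-dimensional space `W`. -/
theorem exists_continuousLinearMap [W.HasOrthogonalProjection] [FiniteDimensional ℝ W]
    (hA : IsMinNormSolutionMap S W A) : ∃ R : F →L[ℝ] E, ⇑R = A := by
  let L : W →L[ℝ] E := LinearMap.toContinuousLinearMap ((hA.isLinearMap.mk' A).comp W.subtype)
  refine ⟨L ∘L W.orthogonalProjectionOnto, funext fun y => ?_⟩
  rw [← hA.apply_orthProj y, orthProj_eq_starProjection]
  rfl

end IsMinNormSolutionMap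

theorem orthogonal_ker_comp_orthProj_le (T : E →L[ℝ] F) (V : Submodule ℝ E)
    [V.HasOrthogonalProjection] :
    (LinearMap.ker ((T ∘L orthProj V : E →L[ℝ] F) : E →ₗ[ℝ] F))ᗮ ≤ V := by
  have h : Vᗮ ≤ LinearMap.ker ((T ∘L orthProj V : E →L[ℝ] F) : E →ₗ[ℝ] F) := fun u hu => by
    simp [orthProj_apply_eq_zero_iff.mpr hu]
  simpa only [orthogonal_orthogonal] using orthogonal_le h

namespace IsMinNormSolutionMap

variable {T : E →L[ℝ] F} {V : Submodule ℝ E} [V.HasOrthogonalProjection] {A : F → E}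

theorem apply_mem (hA : IsMinNormSolutionMap (T ∘L orthProj V) (V.map (T : E →ₗ[ℝ] F)) A)
    (y : F) : A y ∈ V :=
  orthogonal_ker_comp_orthProj_le T V (hA y).1

variable [(V.map (T : E →ₗ[ℝ] F)).HasOrthogonalProjection]

theorem apply_apply_of_mem
    (hA : IsMinNormSolutionMap (T ∘L orthProj V) (V.map (T : E →ₗ[ℝ] F)) A) {v : E}
    (hv : v ∈ V) : T (A (T v)) = T v := by
  have h := (hA (T v)).2
  rwa [comp_apply, orthProj_apply_of_mem (hA.apply_mem _),
    orthProj_apply_of_mem (x := T v) (mem_map_of_mem hv)] at h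

theorem apply_apply_orthProj
    (hA : IsMinNormSolutionMap (T ∘L orthProj V) (V.map (T : E →ₗ[ℝ] F)) A) {d : E}
    (hd : d ∈ (LinearMap.ker (T : E →ₗ[ℝ] F))ᗮ) : A (T (orthProj V d)) = orthProj V d := by
  refine hA.apply_eq (fun u hu => ?_) ?_
  · rw [← inner_orthProj_left_eq_right]
    exact hd _ hu
  · rw [comp_apply, orthProj_apply_of_mem (orthProj_apply_mem d),
      orthProj_apply_of_mem (x := T (orthProj V d)) (mem_map_of_mem (orthProj_apply_mem d))]

variable {C : ℝ}

/-- Since `A (T (P_V d)) = P_V d`, the error `A (T d) - d` is `A (T (d - P_V d)) + (P_V d - d)`. -/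
theorem norm_apply_apply_sub_le
    (hA : IsMinNormSolutionMap (T ∘L orthProj V) (V.map (T : E →ₗ[ℝ] F)) A)
    (hC : ∀ x, ‖A (T x)‖ ≤ C * ‖x‖) {d : E} (hd : d ∈ (LinearMap.ker (T : E →ₗ[ℝ] F))ᗮ) :
    ‖A (T d) - d‖ ≤ (C + 1) * ‖orthProj V d - d‖ := by
  have key : A (T d) - d = A (T (d - orthProj V d)) + (orthProj V d - d) := by
    rw [T.map_sub, hA.map_sub, hA.apply_apply_orthProj hd]
    abel
  calc ‖A (T d) - d‖ ≤ ‖A (T (d - orthProj V d))‖ + ‖orthProj V d - d‖ := key ▸ norm_add_le _ _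
    _ ≤ C * ‖d - orthProj V d‖ + ‖orthProj V d - d‖ := by gcongr; exact hC _
    _ = (C + 1) * ‖orthProj V d - d‖ := by rw [norm_sub_rev]; ring

theorem infDist_ker_inf_le
    (hA : IsMinNormSolutionMap (T ∘L orthProj V) (V.map (T : E →ₗ[ℝ] F)) A)
    (hC : ∀ x, ‖A (T x)‖ ≤ C * ‖x‖) {x : E} (hx : x ∈ LinearMap.ker (T : E →ₗ[ℝ] F)) :
    infDist x ((LinearMap.ker (T : E →ₗ[ℝ] F) ⊓ V : Submodule ℝ E) : Set E) ≤
      (C + 1) * ‖orthProj V x - x‖ := by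
  set p := orthProj V x
  have hp : p ∈ V := orthProj_apply_mem x
  have hmem : p - A (T p) ∈ LinearMap.ker (T : E →ₗ[ℝ] F) ⊓ V :=
    ⟨by simp [hA.apply_apply_of_mem hp], sub_mem hp (hA.apply_mem _)⟩
  have hTp : T p = T (p - x) := by simp [show T x = 0 from hx]
  calc infDist x ((LinearMap.ker (T : E →ₗ[ℝ] F) ⊓ V : Submodule ℝ E) : Set E)
      ≤ dist x (p - A (T p)) := infDist_le_dist_of_mem hmem
    _ = ‖A (T (p - x)) - (p - x)‖ := by rw [dist_eq_norm, hTp]; abel_nf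
    _ ≤ ‖A (T (p - x))‖ + ‖p - x‖ := norm_sub_le _ _
    _ ≤ C * ‖p - x‖ + ‖p - x‖ := by gcongr; exact hC _
    _ = (C + 1) * ‖p - x‖ := by ring

end IsMinNormSolutionMap

theorem exists_norm_le_of_tendsto_inner [CompleteSpace F] {u : ℕ → F} {a : F}
    (h : ∀ v, Tendsto (fun n => inner ℝ (u n) v) atTop (𝓝 (inner ℝ a v))) :
    ∃ M, ∀ n, ‖u n‖ ≤ M := by
  obtain ⟨M, hM⟩ := banach_steinhaus (g := fun n => innerSL ℝ (u n)) fun v => by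
    obtain ⟨M, hM⟩ := (h v).norm.bddAbove_range
    exact ⟨M, fun n => hM (Set.mem_range_self n)⟩
  exact ⟨M, fun n => by simpa only [innerSL_apply_norm] using hM n⟩

theorem exists_bound_of_tendsto_inner [CompleteSpace E] [CompleteSpace F] {R : ℕ → E →L[ℝ] F}
    {L : E → F} (h : ∀ x v, Tendsto (fun n => inner ℝ (R n x) v) atTop (𝓝 (inner ℝ (L x) v))) :
    ∃ C, ∀ n x, ‖R n x‖ ≤ C * ‖x‖ := by
  obtain ⟨C, hC⟩ := banach_steinhaus fun x => exists_norm_le_of_tendsto_inner (h x)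
  exact ⟨C, fun n x => (R n).le_opNorm x |>.trans <|
    mul_le_mul_of_nonneg_right (hC n) (norm_nonneg x)⟩

section LeastSquaresProjectionApproximation

variable {T : E →L[ℝ] F} {V : ℕ → Submodule ℝ E} [∀ n, (V n).HasOrthogonalProjection]
  [∀ n, ((V n).map (T : E →ₗ[ℝ] F)).HasOrthogonalProjection] {A : ℕ → F → E} {C : ℝ}

theorem tendsto_apply_apply_of_bound
    (hA : ∀ n, IsMinNormSolutionMap (T ∘L orthProj (V n)) ((V n).map (T : E →ₗ[ℝ] F)) (A n))
    (hV : ∀ x, Tendsto (fun n => orthProj (V n) x) atTop (𝓝 x))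
    (hC : ∀ n x, ‖A n (T x)‖ ≤ C * ‖x‖) {d : E} (hd : d ∈ (LinearMap.ker (T : E →ₗ[ℝ] F))ᗮ) :
    Tendsto (fun n => A n (T d)) atTop (𝓝 d) := by
  have h := (tendsto_iff_norm_sub_tendsto_zero.mp (hV d)).const_mul (C + 1)
  rw [mul_zero] at h
  exact tendsto_iff_norm_sub_tendsto_zero.mpr <| squeeze_zero (fun n => norm_nonneg _)
    (fun n => (hA n).norm_apply_apply_sub_le (hC n) hd) h

theorem tendsto_infDist_ker_inf
    (hA : ∀ n, IsMinNormSolutionMap (T ∘L orthProj (V n)) ((V n).map (T : E →ₗ[ℝ] F)) (A n))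
    (hV : ∀ x, Tendsto (fun n => orthProj (V n) x) atTop (𝓝 x))
    (hC : ∀ n x, ‖A n (T x)‖ ≤ C * ‖x‖) {x : E} (hx : x ∈ LinearMap.ker (T : E →ₗ[ℝ] F)) :
    Tendsto (fun n => infDist x ((LinearMap.ker (T : E →ₗ[ℝ] F) ⊓ V n : Submodule ℝ E) : Set E))
      atTop (𝓝 0) := by
  have h := (tendsto_iff_norm_sub_tendsto_zero.mp (hV x)).const_mul (C + 1)
  rw [mul_zero] at h
  exact squeeze_zero (fun n => infDist_nonneg) (fun n => (hA n).infDist_ker_inf_le (hC n) hx) h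

end LeastSquaresProjectionApproximation

end

theorem mem_of_tendsto_infDist {α ι : Type*} [PseudoMetricSpace α] {l : Filter ι} [l.NeBot]
    {s : Set α} {t : ι → Set α} {x : α} (hs : IsClosed s) (hts : ∀ i, t i ⊆ s)
    (ht : ∀ i, (t i).Nonempty) (h : Tendsto (fun i => infDist x (t i)) l (𝓝 0)) : x ∈ s := by
  obtain ⟨i⟩ := nonempty_of_neBot l
  rw [hs.mem_iff_infDist_zero ((ht i).mono (hts i))]
  refine le_antisymm (ge_of_tendsto h (Eventually.of_forall fun i => ?_)) infDist_nonneg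
  exact infDist_le_infDist_of_subset (hts i) (ht i)

theorem stmt9_general
    (T : X →L[ℝ] Y) (Xn : ℕ → Submodule ℝ X)
    (hfin : ∀ n, FiniteDimensional ℝ (Xn n))
    (hproj : ∀ x : X, Tendsto (fun n => orthProj (Xn n) x) atTop (𝓝 x))
    (Tn : ℕ → X →L[ℝ] Y) (hTn : ∀ n, Tn n = T.comp (orthProj (Xn n)))
    (Tdag : Y → X)
    (hTdag : ∀ y ∈ (LinearMap.range (T : X →ₗ[ℝ] Y) ⊔ (LinearMap.range (T : X →ₗ[ℝ] Y))ᗮ : Submodule ℝ Y),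
      Tdag y ∈ (LinearMap.ker (T : X →ₗ[ℝ] Y))ᗮ ∧
        T (Tdag y) = orthProj (LinearMap.range (T : X →ₗ[ℝ] Y)).topologicalClosure y)
    (Tdagn : ℕ → Y → X)
    (hTdagn : ∀ n (y : Y), Tdagn n y ∈ (LinearMap.ker (Tn n : X →ₗ[ℝ] Y))ᗮ ∧
      (Tn n) (Tdagn n y) = orthProj ((Xn n).map (T : X →ₗ[ℝ] Y)) y) :
    ((∀ y ∈ (LinearMap.range (T : X →ₗ[ℝ] Y) ⊔ (LinearMap.range (T : X →ₗ[ℝ] Y))ᗮ : Submodule ℝ Y), ∀ v : X,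
        Tendsto (fun n => (inner ℝ (Tdagn n y) v : ℝ)) atTop (𝓝 (inner ℝ (Tdag y) v)))
      ↔ (∀ y ∈ (LinearMap.range (T : X →ₗ[ℝ] Y) ⊔ (LinearMap.range (T : X →ₗ[ℝ] Y))ᗮ : Submodule ℝ Y),
        Tendsto (fun n => Tdagn n y) atTop (𝓝 (Tdag y)))) ∧
    ((∀ y ∈ (LinearMap.range (T : X →ₗ[ℝ] Y) ⊔ (LinearMap.range (T : X →ₗ[ℝ] Y))ᗮ : Submodule ℝ Y),
        Tendsto (fun n => Tdagn n y) atTop (𝓝 (Tdag y)))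
      ↔ (∃ C : ℝ, ∀ n (x : X), ‖Tdagn n (T x)‖ ≤ C * ‖x‖)) ∧
    ((∃ C : ℝ, ∀ n (x : X), ‖Tdagn n (T x)‖ ≤ C * ‖x‖) →
      (∀ x : X, x ∈ LinearMap.ker (T : X →ₗ[ℝ] Y) ↔
      Tendsto (fun n => Metric.infDist x ((LinearMap.ker (T : X →ₗ[ℝ] Y) ⊓ Xn n : Submodule ℝ X) : Set X))
        atTop (𝓝 0))) := by
  have := hfin
  obtain rfl : Tn = fun n => T ∘L orthProj (Xn n) := funext hTn
  have hA : ∀ n, IsMinNormSolutionMap (T ∘L orthProj (Xn n)) ((Xn n).map (T : X →ₗ[ℝ] Y))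
      (Tdagn n) := hTdagn
  set D : Submodule ℝ Y := LinearMap.range (T : X →ₗ[ℝ] Y) ⊔ (LinearMap.range (T : X →ₗ[ℝ] Y))ᗮ
  have strong_of_bound : (∃ C : ℝ, ∀ n (x : X), ‖Tdagn n (T x)‖ ≤ C * ‖x‖) →
      ∀ y ∈ D, Tendsto (fun n => Tdagn n y) atTop (𝓝 (Tdag y)) := by
    rintro ⟨C, hC⟩ y hy
    obtain ⟨hker, hTy⟩ := hTdag y hy
    have hW (n : ℕ) : y - T (Tdag y) ∈ ((Xn n).map (T : X →ₗ[ℝ] Y))ᗮ :=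
      orthogonal_le (LinearMap.map_le_range.trans (le_topologicalClosure _))
        (hTy ▸ sub_orthProj_mem_orthogonal y)
    simpa only [fun n => (hA n).apply_eq_of_sub_mem_orthogonal (hW n)]
      using tendsto_apply_apply_of_bound hA hproj hC hker
  have bound_of_weak (hw : ∀ y ∈ D, ∀ v : X,
      Tendsto (fun n => inner ℝ (Tdagn n y) v) atTop (𝓝 (inner ℝ (Tdag y) v))) :
      ∃ C : ℝ, ∀ n (x : X), ‖Tdagn n (T x)‖ ≤ C * ‖x‖ := by
    choose R hR using fun n => (hA n).exists_continuousLinearMap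
    simpa only [comp_apply, hR] using exists_bound_of_tendsto_inner (R := fun n => R n ∘L T)
      fun x => by simpa only [comp_apply, hR] using hw (T x) (mem_sup_left ⟨x, rfl⟩)
  have weak_of_strong (hs : ∀ y ∈ D, Tendsto (fun n => Tdagn n y) atTop (𝓝 (Tdag y))) :
      ∀ y ∈ D, ∀ v : X, Tendsto (fun n => inner ℝ (Tdagn n y) v) atTop (𝓝 (inner ℝ (Tdag y) v)) :=
    fun y hy v => (hs y hy).inner tendsto_const_nhds
  refine ⟨⟨fun hw => strong_of_bound (bound_of_weak hw), weak_of_strong⟩,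
    ⟨fun hs => bound_of_weak (weak_of_strong hs), strong_of_bound⟩, fun ⟨C, hC⟩ x => ⟨?_, ?_⟩⟩
  · exact tendsto_infDist_ker_inf hA hproj hC
  · exact mem_of_tendsto_infDist T.isClosed_ker (fun n => inf_le_left) (fun n => ⟨0, zero_mem _⟩)

/-- Weak convergence ⇔ strong convergence ⇔ uniform boundedness of `Tₙ†T`;
and these imply kernel approximability. -/
theorem stmt9
    (T : X →L[ℝ] Y) (Xn : ℕ → Submodule ℝ X)
    (hfin : ∀ n, FiniteDimensional ℝ (Xn n))
    (hinf : ¬ FiniteDimensional ℝ X)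
    (hproj : ∀ x : X, Tendsto (fun n => orthProj (Xn n) x) atTop (𝓝 x))
    (Tn : ℕ → X →L[ℝ] Y) (hTn : ∀ n, Tn n = T.comp (orthProj (Xn n)))
    (Tdag : Y → X)
    (hTdag : ∀ y ∈ (LinearMap.range (T : X →ₗ[ℝ] Y) ⊔ (LinearMap.range (T : X →ₗ[ℝ] Y))ᗮ : Submodule ℝ Y),
      Tdag y ∈ (LinearMap.ker (T : X →ₗ[ℝ] Y))ᗮ ∧
        T (Tdag y) = orthProj (LinearMap.range (T : X →ₗ[ℝ] Y)).topologicalClosure y)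
    (Tdagn : ℕ → Y → X)
    (hTdagn : ∀ n (y : Y), Tdagn n y ∈ (LinearMap.ker (Tn n : X →ₗ[ℝ] Y))ᗮ ∧
      (Tn n) (Tdagn n y) = orthProj ((Xn n).map (T : X →ₗ[ℝ] Y)) y) :
    ((∀ y ∈ (LinearMap.range (T : X →ₗ[ℝ] Y) ⊔ (LinearMap.range (T : X →ₗ[ℝ] Y))ᗮ : Submodule ℝ Y), ∀ v : X,
        Tendsto (fun n => (inner ℝ (Tdagn n y) v : ℝ)) atTop (𝓝 (inner ℝ (Tdag y) v)))
      ↔ (∀ y ∈ (LinearMap.range (T : X →ₗ[ℝ] Y) ⊔ (LinearMap.range (T : X →ₗ[ℝ] Y))ᗮ : Submodule ℝ Y),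
        Tendsto (fun n => Tdagn n y) atTop (𝓝 (Tdag y)))) ∧
    ((∀ y ∈ (LinearMap.range (T : X →ₗ[ℝ] Y) ⊔ (LinearMap.range (T : X →ₗ[ℝ] Y))ᗮ : Submodule ℝ Y),
        Tendsto (fun n => Tdagn n y) atTop (𝓝 (Tdag y)))
      ↔ (∃ C : ℝ, ∀ n (x : X), ‖Tdagn n (T x)‖ ≤ C * ‖x‖)) ∧
    ((∃ C : ℝ, ∀ n (x : X), ‖Tdagn n (T x)‖ ≤ C * ‖x‖) →
      (∀ x : X, x ∈ LinearMap.ker (T : X →ₗ[ℝ] Y) ↔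
      Tendsto (fun n => Metric.infDist x ((LinearMap.ker (T : X →ₗ[ℝ] Y) ⊓ Xn n : Submodule ℝ X) : Set X))
        atTop (𝓝 0))) :=
  stmt9_general T Xn hfin hproj Tn hTn Tdag hTdag Tdagn hTdagn
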